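/- Let A be a formally real integral domain which is an ℝ-algebra. Let I₀, M₀ be imaginary units whose vector parts are orthogonal in ℝ³, let h = h₀ + h₁·ι(M₀) with h₀, h₁ ∈ A, h₁ ≠ 0, and let g ∈ Quaternion A; write g uniquely as g = g₀ + g₁·ι(I₀) + g₂·ι(M₀) + g₃·ι(I₀M₀) with g₀, g₁, g₂, g₃ ∈ A (possible since 1, I₀, M₀, I₀M₀ is an ℝ-basis of Quaternion ℝ). Then there exists an I₀-sliced f ∈ Quaternion A with h * f * star h = g if and only if g₂ = 0, (h₀² + h₁²) divides g₀ in A, (h₀² − h₁²) divides g₁ in A, h₀·h₁ divides g₃ in A, and 2h₀h₁g₁ + (h₀² − h₁²)g₃ = 0. (Proposition 5.11, case (iii).) -/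

import Mathlib

open Quaternion

/-- The componentwise extension `ι : ℍ[ℝ] → ℍ[A]` of `algebraMap ℝ A`. -/
noncomputable def qmap {A : Type*} [CommRing A] [Algebra ℝ A] (q : Quaternion ℝ) :
    Quaternion A :=
  ⟨algebraMap ℝ A q.re, algebraMap ℝ A q.imI, algebraMap ℝ A q.imJ, algebraMap ℝ A q.imK⟩

/-- An imaginary unit: a real quaternion with zero real part squaring to `-1`. -/
def IsImaginaryUnit (I : Quaternion ℝ) : Prop := I.re = 0 ∧ I ^ 2 = -1

/-- `q` is `I`-sliced if `q = a + b·ι(I)` for some `a, b ∈ A`. -/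
noncomputable def IsSliced {A : Type*} [CommRing A] [Algebra ℝ A]
    (I : Quaternion ℝ) (q : Quaternion A) : Prop :=
  ∃ a b : A, q = (a : Quaternion A) + (b : Quaternion A) * qmap I

/-- The vector parts of `I` and `M` are orthogonal in `ℝ³`. -/
def OrthIm (I M : Quaternion ℝ) : Prop :=
  I.imI * M.imI + I.imJ * M.imJ + I.imK * M.imK = 0

/-- `A` is formally real: a sum of four squares vanishes only trivially. -/
def FormallyRealFour (A : Type*) [CommRing A] : Prop :=
  ∀ a b c d : A, a ^ 2 + b ^ 2 + c ^ 2 + d ^ 2 = 0 → a = 0 ∧ b = 0 ∧ c = 0 ∧ d = 0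

/-! The map `1, i, j ↦ 1, ι(I₀), ι(M₀)` extends to an `A`-algebra map from `ℍ[A]` in its standard
coordinates to `ℍ[A]`, because `ι(I₀)` and `ι(M₀)` square to `-1` and anticommute. It commutes with
conjugation and preserves real parts, hence is injective, so `h * f * star h = g` can be checked in
standard coordinates, where
`(h₀ + h₁ j)(a + b i)(h₀ - h₁ j) = (h₀² + h₁²) a + (h₀² - h₁²) b i - 2 h₀ h₁ b k`.
What remains is a divisibility problem in `A`; when `h₀² = h₁²` it is solved by halving. -/

section qmap

variable {A : Type*} [CommRing A] [Algebra ℝ A]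

@[simp] lemma qmap_re (q : ℍ[ℝ]) : (qmap q : ℍ[A]).re = algebraMap ℝ A q.re := rfl
@[simp] lemma qmap_imI (q : ℍ[ℝ]) : (qmap q : ℍ[A]).imI = algebraMap ℝ A q.imI := rfl
@[simp] lemma qmap_imJ (q : ℍ[ℝ]) : (qmap q : ℍ[A]).imJ = algebraMap ℝ A q.imJ := rfl
@[simp] lemma qmap_imK (q : ℍ[ℝ]) : (qmap q : ℍ[A]).imK = algebraMap ℝ A q.imK := rfl

@[simp] lemma qmap_neg (q : ℍ[ℝ]) : (qmap (-q) : ℍ[A]) = -qmap q := by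
  ext <;> simp

@[simp] lemma qmap_one : (qmap 1 : ℍ[A]) = 1 := by
  ext <;> simp

lemma qmap_mul (p q : ℍ[ℝ]) : (qmap (p * q) : ℍ[A]) = qmap p * qmap q := by
  ext <;> simp

lemma qmap_star (q : ℍ[ℝ]) : (qmap (star q) : ℍ[A]) = star (qmap q) := by
  ext <;> simp

end qmap

lemma IsImaginaryUnit.mul_self {I : ℍ[ℝ]} (hI : IsImaginaryUnit I) : I * I = -1 := by
  rw [← pow_two, hI.2]

lemma OrthIm.re_mul {I M : ℍ[ℝ]} (hI : I.re = 0) (hM : M.re = 0) (horth : OrthIm I M) :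
    (I * M).re = 0 := by
  rw [OrthIm] at horth
  simp only [Quaternion.re_mul, hI, hM]
  linear_combination -horth

lemma OrthIm.mul_anticomm {I M : ℍ[ℝ]} (hI : I.re = 0) (hM : M.re = 0) (horth : OrthIm I M) :
    M * I = -(I * M) := by
  rw [OrthIm] at horth
  ext
  · simp only [Quaternion.re_mul, re_neg, hI, hM]
    linear_combination -2 * horth
  all_goals
    simp only [Quaternion.imI_mul, Quaternion.imJ_mul, Quaternion.imK_mul, Quaternion.imI_neg,
      Quaternion.imJ_neg, Quaternion.imK_neg, hI, hM]
    ring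

lemma QuaternionAlgebra.injective_of_re_map {R : Type*} [CommRing R]
    (φ : ℍ[R,-1,0,-1] →+* ℍ[R]) (hφ : ∀ z, (φ z).re = z.re) : Function.Injective φ := by
  refine (injective_iff_map_eq_zero φ).2 fun x hx => ?_
  have hre : ∀ y, (x * y).re = 0 := fun y => by rw [← hφ, map_mul, hx, zero_mul]; rfl
  ext
  · simpa using hre 1
  · simpa using hre ⟨0, 1, 0, 0⟩
  · simpa using hre ⟨0, 0, 1, 0⟩
  · simpa using hre ⟨0, 0, 0, 1⟩

lemma QuaternionAlgebra.mk_mul_mk_mul_star_mk {R : Type*} [CommRing R] (h₀ h₁ a b : R) :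
    (⟨h₀, 0, h₁, 0⟩ : ℍ[R,-1,0,-1]) * ⟨a, b, 0, 0⟩ * star ⟨h₀, 0, h₁, 0⟩
      = ⟨(h₀ ^ 2 + h₁ ^ 2) * a, (h₀ ^ 2 - h₁ ^ 2) * b, 0, -(2 * (h₀ * h₁) * b)⟩ := by
  ext <;> simp <;> ring

section orthLift

variable {A : Type*} [CommRing A] [Algebra ℝ A] {I M : ℍ[ℝ]}
  (hI : IsImaginaryUnit I) (hM : IsImaginaryUnit M) (horth : OrthIm I M)

noncomputable def orthLift : ℍ[A,-1,0,-1] →ₐ[A] ℍ[A] :=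
  QuaternionAlgebra.Basis.liftHom
    { i := qmap I
      j := qmap M
      k := qmap (I * M)
      i_mul_i := by simp [← qmap_mul, hI.mul_self]
      j_mul_j := by simp [← qmap_mul, hM.mul_self]
      i_mul_j := (qmap_mul I M).symm
      j_mul_i := by simp [← qmap_mul, horth.mul_anticomm hI.1 hM.1] }

lemma orthLift_mk (a b c d : A) :
    orthLift hI hM horth ⟨a, b, c, d⟩
      = (a : ℍ[A]) + (b : ℍ[A]) * qmap I + (c : ℍ[A]) * qmap M + (d : ℍ[A]) * qmap (I * M) := by
  simp [orthLift, QuaternionAlgebra.Basis.lift, coe_mul_eq_smul]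

lemma re_orthLift (z : ℍ[A,-1,0,-1]) : (orthLift hI hM horth z).re = z.re := by
  obtain ⟨a, b, c, d⟩ := z
  rw [orthLift_mk]
  simp [hI.1, hM.1, horth.re_mul hI.1 hM.1]

lemma orthLift_star (z : ℍ[A,-1,0,-1]) :
    orthLift hI hM horth (star z) = star (orthLift hI hM horth z) := by
  obtain ⟨a, b, c, d⟩ := z
  have hIM : star (I * M) = -(I * M) := star_eq_neg.2 (horth.re_mul hI.1 hM.1)
  simp [orthLift_mk, ← qmap_star, star_eq_neg.2 hI.1, star_eq_neg.2 hM.1, hIM, coe_commutes]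

lemma orthLift_injective : Function.Injective (orthLift hI hM horth (A := A)) :=
  QuaternionAlgebra.injective_of_re_map (orthLift hI hM horth).toRingHom (re_orthLift hI hM horth)

end orthLift

lemma exists_eq_mul_and_eq_neg_two_mul_iff {R : Type*} [CommRing R] [NoZeroDivisors R]
    (h2 : IsUnit (2 : R)) {d p x y : R} :
    (∃ b, x = d * b ∧ y = -(2 * p * b)) ↔ d ∣ x ∧ p ∣ y ∧ 2 * p * x + d * y = 0 := by
  constructor
  · rintro ⟨b, rfl, rfl⟩
    exact ⟨dvd_mul_right d b, ⟨-(2 * b), by ring⟩, by ring⟩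
  · rintro ⟨⟨b, rfl⟩, ⟨c, rfl⟩, hrel⟩
    by_cases hd : d = 0
    · obtain ⟨b', hb'⟩ := h2.dvd (a := -c)
      exact ⟨b', by simp [hd], by linear_combination -p * hb'⟩
    · refine ⟨b, rfl, ?_⟩
      have : d * (2 * p * b + p * c) = 0 := by linear_combination hrel
      linear_combination (mul_eq_zero.1 this).resolve_left hd

lemma conj_sliced_eq_iff {A : Type*} [CommRing A] [Algebra ℝ A] {I M : ℍ[ℝ]}
    (hI : IsImaginaryUnit I) (hM : IsImaginaryUnit M) (horth : OrthIm I M)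
    (h₀ h₁ a b g₀ g₁ g₂ g₃ : A) :
    ((h₀ : ℍ[A]) + (h₁ : ℍ[A]) * qmap M) * ((a : ℍ[A]) + (b : ℍ[A]) * qmap I)
        * star ((h₀ : ℍ[A]) + (h₁ : ℍ[A]) * qmap M)
      = (g₀ : ℍ[A]) + (g₁ : ℍ[A]) * qmap I + (g₂ : ℍ[A]) * qmap M + (g₃ : ℍ[A]) * qmap (I * M) ↔
    g₀ = (h₀ ^ 2 + h₁ ^ 2) * a ∧ g₁ = (h₀ ^ 2 - h₁ ^ 2) * b ∧ g₂ = 0 ∧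
      g₃ = -(2 * (h₀ * h₁) * b) := by
  have hh : (h₀ : ℍ[A]) + (h₁ : ℍ[A]) * qmap M = orthLift hI hM horth ⟨h₀, 0, h₁, 0⟩ := by
    simp [orthLift_mk]
  have hf : (a : ℍ[A]) + (b : ℍ[A]) * qmap I = orthLift hI hM horth ⟨a, b, 0, 0⟩ := by
    simp [orthLift_mk]
  rw [hh, hf, ← orthLift_star, ← map_mul, ← map_mul, QuaternionAlgebra.mk_mul_mk_mul_star_mk,
    ← orthLift_mk hI hM horth, (orthLift_injective hI hM horth).eq_iff]
  simp [QuaternionAlgebra.ext_iff, eq_comm]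

theorem exists_sliced_conjugated_eq_case_orthogonal_general
    {A : Type*} [CommRing A] [IsDomain A] [Algebra ℝ A]
    (I₀ M₀ : Quaternion ℝ) (hI₀ : IsImaginaryUnit I₀) (hM₀ : IsImaginaryUnit M₀)
    (horth : OrthIm I₀ M₀)
    (h₀ h₁ : A) (h : Quaternion A)
    (hh : h = (h₀ : Quaternion A) + (h₁ : Quaternion A) * qmap M₀)
    (g : Quaternion A) (g₀ g₁ g₂ g₃ : A)
    (hg : g = (g₀ : Quaternion A) + (g₁ : Quaternion A) * qmap I₀
        + (g₂ : Quaternion A) * qmap M₀ + (g₃ : Quaternion A) * qmap (I₀ * M₀)) :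
    (∃ f : Quaternion A, IsSliced I₀ f ∧ h * f * star h = g) ↔
      g₂ = 0 ∧ (h₀ ^ 2 + h₁ ^ 2) ∣ g₀ ∧ (h₀ ^ 2 - h₁ ^ 2) ∣ g₁ ∧ (h₀ * h₁) ∣ g₃ ∧
        2 * h₀ * h₁ * g₁ + (h₀ ^ 2 - h₁ ^ 2) * g₃ = 0 := by
  have h2 : IsUnit (2 : A) :=
    map_ofNat (algebraMap ℝ A) 2 ▸ (IsUnit.mk0 (2 : ℝ) two_ne_zero).map _
  subst hh hg
  rw [mul_assoc 2 h₀ h₁, ← exists_eq_mul_and_eq_neg_two_mul_iff h2]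
  constructor
  · rintro ⟨f, ⟨a, b, rfl⟩, hf⟩
    obtain ⟨ha, hb, h₂, h₃⟩ := (conj_sliced_eq_iff hI₀ hM₀ horth _ _ _ _ _ _ _ _).1 hf
    exact ⟨h₂, ⟨a, ha⟩, b, hb, h₃⟩
  · rintro ⟨h₂, ⟨a, ha⟩, b, hb, h₃⟩
    exact ⟨_, ⟨a, b, rfl⟩, (conj_sliced_eq_iff hI₀ hM₀ horth _ _ _ _ _ _ _ _).2 ⟨ha, hb, h₂, h₃⟩⟩

theorem exists_sliced_conjugated_eq_case_orthogonal
    {A : Type*} [CommRing A] [IsDomain A] [Algebra ℝ A] (hFR : FormallyRealFour A)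
    (I₀ M₀ : Quaternion ℝ) (hI₀ : IsImaginaryUnit I₀) (hM₀ : IsImaginaryUnit M₀)
    (horth : OrthIm I₀ M₀)
    (h₀ h₁ : A) (hh₁ : h₁ ≠ 0) (h : Quaternion A)
    (hh : h = (h₀ : Quaternion A) + (h₁ : Quaternion A) * qmap M₀)
    (g : Quaternion A) (g₀ g₁ g₂ g₃ : A)
    (hg : g = (g₀ : Quaternion A) + (g₁ : Quaternion A) * qmap I₀
        + (g₂ : Quaternion A) * qmap M₀ + (g₃ : Quaternion A) * qmap (I₀ * M₀)) :
    (∃ f : Quaternion A, IsSliced I₀ f ∧ h * f * star h = g) ↔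
      g₂ = 0 ∧ (h₀ ^ 2 + h₁ ^ 2) ∣ g₀ ∧ (h₀ ^ 2 - h₁ ^ 2) ∣ g₁ ∧ (h₀ * h₁) ∣ g₃ ∧
        2 * h₀ * h₁ * g₁ + (h₀ ^ 2 - h₁ ^ 2) * g₃ = 0 :=
  exists_sliced_conjugated_eq_case_orthogonal_general I₀ M₀ hI₀ hM₀ horth h₀ h₁ h hh g g₀ g₁ g₂ g₃
    hg
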